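/- arXiv:2012.01819 — 2 statements merged into one kernel-verified Lean document; each statement's English description precedes it below -/
import Mathlib

section
/- The joint density of (z, τ₁), where z = τ₁/√(vd) + √(1 + τ₁²/d) · τ₂/√(d+1) with τ₁ ~ t(d) and τ₂ ~ t(d+1) independent, is proportional to (1 + (1/d)·(d·z² - 2·(√(vd)/v)·z·τ₁ + ((v+1)/v)·τ₁²))^(-(d+2)/2), which is the kernel of a bivariate t-distribution with d degrees of freedom, zero location vector, and dispersion matrix Ω with entries Ω₁₁ = (v+1)/(vd), Ω₁₂ = Ω₂₁ = √(vd)/(vd), Ω₂₂ = 1. -/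
/-
Conditionally on `τ₁ = t`, `z = t / √(vd) + s(t) τ₂` is an affine image of `τ₂ ~ t(d + 1)`, with
scale `s(t) = √q / √(d + 1)` where `q = 1 + t²/d`. So the joint density of `(z, τ₁)` at `(w, t)` is
`t_d(t) · s(t)⁻¹ · t_{d+1}((w - t/√(vd)) / s(t))`. As
`1 + ((w - t/√(vd)) / s(t))² / (d + 1) = (q + (w - t/√(vd))²) / q`, all powers of `q` cancel,
leaving a constant times `(q + (w - t/√(vd))²)^(-(d+2)/2)`; completing the square in `w` turns
`q + (w - t/√(vd))²` into `1 + (1/d) xᵀ Ω⁻¹ x`.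
-/

open MeasureTheory ProbabilityTheory Real Matrix

/-- Density of the standard t-distribution with `d` degrees of freedom. -/
noncomputable def tdens (d t : ℝ) : ℝ :=
  Real.Gamma ((d + 1) / 2) / (Real.Gamma (d / 2) * Real.sqrt (Real.pi * d)) *
    (1 + t ^ 2 / d) ^ (-((d + 1) / 2))

open scoped ENNReal

namespace MeasureTheory

theorem map_prod_eq_withDensity_of_map_fiber {α β γ : Type*} [MeasurableSpace α]
    [MeasurableSpace β] [MeasurableSpace γ] {μ : Measure α} {ν : Measure β} {ρ : Measure γ}
    [SFinite μ] [SFinite ν] [SFinite ρ] {φ : α → β → γ} (hφ : Measurable (Function.uncurry φ))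
    {g : α → γ → ℝ≥0∞} (hg : Measurable (Function.uncurry g))
    (hfib : ∀ t, ν.map (φ t) = ρ.withDensity (g t)) :
    (μ.prod ν).map (fun p => (φ p.1 p.2, p.1)) = (ρ.prod μ).withDensity fun p => g p.2 p.1 := by
  have hψ : Measurable fun p : α × β => (φ p.1 p.2, p.1) := hφ.prodMk measurable_fst
  ext s hs
  rw [Measure.map_apply hψ hs, Measure.prod_apply (hψ hs), withDensity_apply _ hs,
    ← lintegral_indicator hs,
    lintegral_prod_symm (s.indicator fun p => g p.2 p.1)
      ((hg.comp measurable_swap).indicator hs).aemeasurable]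
  refine lintegral_congr fun t => ?_
  have hst : MeasurableSet ((fun w => (w, t)) ⁻¹' s) := measurable_prodMk_right hs
  calc ν (Prod.mk t ⁻¹' ((fun p => (φ p.1 p.2, p.1)) ⁻¹' s))
      = ν.map (φ t) ((fun w => (w, t)) ⁻¹' s) := (Measure.map_apply hφ.of_uncurry_left hst).symm
    _ = ∫⁻ w in (fun w => (w, t)) ⁻¹' s, g t w ∂ρ := by rw [hfib, withDensity_apply _ hst]
    _ = _ := (lintegral_indicator hst _).symm

theorem map_add_mul_volume (a : ℝ) {b : ℝ} (hb : b ≠ 0) :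
    (volume : Measure ℝ).map (fun x => a + b * x) = ENNReal.ofReal |b⁻¹| • volume := by
  rw [show (fun x : ℝ => a + b * x) = (a + ·) ∘ (b * ·) from rfl,
    ← Measure.map_map (measurable_const_add a) (measurable_const_mul b),
    Real.map_volume_mul_left hb, Measure.map_smul, map_add_left_eq_self]

theorem map_add_mul_volume_withDensity {f : ℝ → ℝ≥0∞} (hf : Measurable f) (a : ℝ) {b : ℝ}
    (hb : b ≠ 0) :
    (volume.withDensity f).map (fun x => a + b * x)
      = volume.withDensity fun w => ENNReal.ofReal |b⁻¹| * f ((w - a) / b) := by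
  have hT : Measurable fun x : ℝ => a + b * x := by fun_prop
  ext s hs
  set F := s.indicator fun w => f ((w - a) / b)
  have hF : Measurable F := (hf.comp (by fun_prop)).indicator hs
  calc (volume.withDensity f).map (fun x => a + b * x) s
      = ∫⁻ x, F (a + b * x) := by
        rw [Measure.map_apply hT hs, withDensity_apply _ (hT hs), ← lintegral_indicator (hT hs)]
        congr 1 with x
        by_cases hx : a + b * x ∈ s <;> simp [F, hx, hb]
    _ = ∫⁻ w, F w ∂(volume.map fun x => a + b * x) := (lintegral_map hF hT).symm
    _ = _ := by
        rw [map_add_mul_volume a hb, lintegral_smul_measure, smul_eq_mul, withDensity_apply _ hs,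
          ← lintegral_const_mul' _ _ ENNReal.ofReal_ne_top, ← lintegral_indicator hs]
        simp [F, Set.indicator_mul_right]

end MeasureTheory

noncomputable def tdensConst (d : ℝ) : ℝ :=
  Real.Gamma ((d + 1) / 2) / (Real.Gamma (d / 2) * Real.sqrt (Real.pi * d))

theorem tdens_eq (d t : ℝ) : tdens d t = tdensConst d * (1 + t ^ 2 / d) ^ (-((d + 1) / 2)) := rfl

theorem tdensConst_pos {d : ℝ} (hd : 0 < d) : 0 < tdensConst d := by
  unfold tdensConst; positivity

theorem tdens_nonneg {d : ℝ} (hd : 0 < d) (t : ℝ) : 0 ≤ tdens d t := by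
  unfold tdens; positivity

@[fun_prop]
theorem measurable_tdens (d : ℝ) : Measurable (tdens d) := by
  unfold tdens; fun_prop

theorem tdens_mul_scaled_tdens_add_one {d : ℝ} (hd : 0 < d) (t x : ℝ) :
    tdens d t * ((√(1 + t ^ 2 / d) / √(d + 1))⁻¹ *
        tdens (d + 1) (x / (√(1 + t ^ 2 / d) / √(d + 1))))
      = tdensConst d * tdensConst (d + 1) * √(d + 1) *
          (1 + t ^ 2 / d + x ^ 2) ^ (-((d + 2) / 2)) := by
  set q := 1 + t ^ 2 / d
  have hq : 0 < q := by positivity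
  have hscale : 1 + (x / (√q / √(d + 1))) ^ 2 / (d + 1) = (q + x ^ 2) / q := by
    rw [div_pow, div_pow, sq_sqrt hq.le, sq_sqrt (by positivity)]
    field_simp
  have hpow : q ^ (-((d + 1) / 2)) * (√q)⁻¹ = q ^ (-((d + 2) / 2)) := by
    rw [sqrt_eq_rpow, ← rpow_neg hq.le, ← rpow_add hq]
    ring_nf
  rw [tdens_eq, tdens_eq (d + 1), hscale, show d + 1 + 1 = d + 2 by ring,
    div_rpow (by positivity) hq.le, inv_div]
  calc _ = tdensConst d * tdensConst (d + 1) * √(d + 1) * (q + x ^ 2) ^ (-((d + 2) / 2)) *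
        (q ^ (-((d + 1) / 2)) * (√q)⁻¹ / q ^ (-((d + 2) / 2))) := by ring
    _ = _ := by rw [hpow, div_self (by positivity), mul_one]

theorem one_add_quadForm_eq {d v : ℝ} (hd : 0 < d) (hv : 0 < v) (w t : ℝ) :
    1 + (1 / d) * (d * w ^ 2 - 2 * (√(v * d) / v) * w * t + ((v + 1) / v) * t ^ 2)
      = 1 + t ^ 2 / d + (w - t / √(v * d)) ^ 2 := by
  have hs : √(v * d) ^ 2 = v * d := sq_sqrt (by positivity)
  have hs0 : √(v * d) ≠ 0 := by positivity
  generalize √(v * d) = s at hs hs0 ⊢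
  field_simp
  linear_combination (t * (t - 2 * s * w)) * hs

theorem dispersion_mul_precision {d v : ℝ} (hd : 0 < d) (hv : 0 < v) :
    (!![(v + 1) / (v * d), √(v * d) / (v * d);
        √(v * d) / (v * d), 1] : Matrix (Fin 2) (Fin 2) ℝ) *
      !![d, -(√(v * d) / v); -(√(v * d) / v), (v + 1) / v] = 1 := by
  have hs : √(v * d) ^ 2 = v * d := sq_sqrt (by positivity)
  generalize √(v * d) = s at hs ⊢
  rw [mul_fin_two, one_fin_two]
  congr 1
  ext i j
  fin_cases i <;> fin_cases j <;> simp <;> field_simp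
  · linear_combination -hs
  · ring
  · ring
  · linear_combination -hs

theorem map_tdens_prod_eq_withDensity {d v : ℝ} (hd : 0 < d) (hv : 0 < v) :
    (((volume : Measure ℝ).withDensity fun t => ENNReal.ofReal (tdens d t)).prod
        ((volume : Measure ℝ).withDensity fun t => ENNReal.ofReal (tdens (d + 1) t))).map
        (fun p : ℝ × ℝ => (p.1 / √(v * d) + √(1 + p.1 ^ 2 / d) * (p.2 / √(d + 1)), p.1))
      = (volume : Measure (ℝ × ℝ)).withDensity fun p =>
          ENNReal.ofReal (tdensConst d * tdensConst (d + 1) * √(d + 1) *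
            (1 + (1 / d) * (d * p.1 ^ 2 - 2 * (√(v * d) / v) * p.1 * p.2 +
              ((v + 1) / v) * p.2 ^ 2)) ^ (-((d + 2) / 2))) := by
  set scale : ℝ → ℝ := fun t => √(1 + t ^ 2 / d) / √(d + 1)
  have hscale : ∀ t, 0 < scale t := fun t => by positivity
  have hfiber : ∀ t : ℝ,
      ((volume : Measure ℝ).withDensity fun x => ENNReal.ofReal (tdens (d + 1) x)).map
          (fun x => t / √(v * d) + √(1 + t ^ 2 / d) * (x / √(d + 1)))
        = volume.withDensity fun w => ENNReal.ofReal |(scale t)⁻¹| *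
            ENNReal.ofReal (tdens (d + 1) ((w - t / √(v * d)) / scale t)) := by
    intro t
    rw [← map_add_mul_volume_withDensity (measurable_tdens _).ennreal_ofReal _ (hscale t).ne']
    congr 1 with x
    ring
  rw [map_prod_eq_withDensity_of_map_fiber (by fun_prop) (by fun_prop) hfiber,
    prod_withDensity_right (measurable_tdens d).ennreal_ofReal,
    ← withDensity_mul _ (by fun_prop) (by fun_prop), ← Measure.volume_eq_prod]
  congr 1 with p
  rw [Pi.mul_apply, ← ENNReal.ofReal_mul (abs_nonneg _),
    ← ENNReal.ofReal_mul (tdens_nonneg hd _), abs_of_pos (inv_pos.2 (hscale _)),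
    tdens_mul_scaled_tdens_add_one hd, one_add_quadForm_eq hd hv]

theorem stmt1
    {Ω : Type*} [MeasurableSpace Ω] (P : Measure Ω) [IsProbabilityMeasure P]
    (d v : ℝ) (hd : 0 < d) (hv : 0 < v)
    (τ₁ τ₂ : Ω → ℝ) (hmeas1 : Measurable τ₁) (hmeas2 : Measurable τ₂)
    (hindep : IndepFun τ₁ τ₂ P)
    (h1 : P.map τ₁ = volume.withDensity (fun t => ENNReal.ofReal (tdens d t)))
    (h2 : P.map τ₂ = volume.withDensity (fun t => ENNReal.ofReal (tdens (d + 1) t)))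
    (z : Ω → ℝ)
    (hz : z = fun ω =>
      τ₁ ω / Real.sqrt (v * d) +
        Real.sqrt (1 + (τ₁ ω) ^ 2 / d) * (τ₂ ω / Real.sqrt (d + 1))) :
    (∃ C : ℝ, 0 < C ∧
      P.map (fun ω => (z ω, τ₁ ω)) =
        (volume : Measure (ℝ × ℝ)).withDensity (fun p =>
          ENNReal.ofReal (C * (1 + (1 / d) *
            (d * p.1 ^ 2 - 2 * (Real.sqrt (v * d) / v) * p.1 * p.2 +
              ((v + 1) / v) * p.2 ^ 2)) ^ (-((d + 2) / 2)))))
    ∧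
    (!![(v + 1) / (v * d), Real.sqrt (v * d) / (v * d);
        Real.sqrt (v * d) / (v * d), 1] : Matrix (Fin 2) (Fin 2) ℝ) *
      !![d, -(Real.sqrt (v * d) / v); -(Real.sqrt (v * d) / v), (v + 1) / v] = 1 := by
  refine ⟨⟨tdensConst d * tdensConst (d + 1) * √(d + 1), ?_, ?_⟩, dispersion_mul_precision hd hv⟩
  · exact mul_pos (mul_pos (tdensConst_pos hd) (tdensConst_pos (by positivity))) (by positivity)
  have hcomp : (fun ω => (z ω, τ₁ ω)) = (fun p : ℝ × ℝ =>
      (p.1 / √(v * d) + √(1 + p.1 ^ 2 / d) * (p.2 / √(d + 1)), p.1)) ∘ fun ω => (τ₁ ω, τ₂ ω) := by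
    rw [hz]; rfl
  rw [hcomp, ← Measure.map_map (by fun_prop) (hmeas1.prodMk hmeas2),
    (indepFun_iff_map_prod_eq_prod_map_map hmeas1.aemeasurable hmeas2.aemeasurable).mp hindep,
    h1, h2, map_tdens_prod_eq_withDensity hd hv]
end

section
/- With the notation of the mean-variance problem (Σ positive definite, μ ∈ ℝᵏ, s = μᵀMμ > 0), the minimizer of wᵀΣw subject to 𝟙ᵀw = 1 and μᵀw = R₀ is w* = w_GMV + ((R₀ − R_GMV)/s)·Mμ, and its minimal variance is V* = V_GMV + (R₀ − R_GMV)²/s. That is, for any w with 𝟙ᵀw = 1 and μᵀw = R₀, one has wᵀΣw ≥ V_GMV + (R₀ − R_GMV)²/s, with equality iff w = w*. -/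
/-!
Writing `Mμ = Σ⁻¹ v` with `v = μ - R_GMV • 𝟙`, the candidate is `w* = Σ⁻¹ (V_GMV • 𝟙 + t • v)`
with `t = (R₀ - R_GMV) / s`, so `Σ w*` is a combination of the two constraint vectors `𝟙` and `μ`
(the Lagrange condition). Hence for every feasible `w` the difference `d = w - w*` is
`Σ`-orthogonal to `w*`, and `wᵀΣw = w*ᵀΣw* + dᵀΣd`. Since `𝟙ᵀΣ⁻¹v = 0`, `s = vᵀΣ⁻¹v`, which is
positive because `μ` is not a multiple of `𝟙`.
-/

open Matrix

variable {ι : Type*} [Fintype ι]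

theorem Matrix.IsSymm.dotProduct_mulVec_comm {S : Matrix ι ι ℝ} (hS : S.IsSymm) (x y : ι → ℝ) :
    x ⬝ᵥ (S *ᵥ y) = y ⬝ᵥ (S *ᵥ x) := by
  rw [dotProduct_mulVec, ← mulVec_transpose, hS.eq, dotProduct_comm]

theorem Matrix.IsSymm.add_dotProduct_mulVec_add {S : Matrix ι ι ℝ} (hS : S.IsSymm) (x d : ι → ℝ) :
    (x + d) ⬝ᵥ (S *ᵥ (x + d)) = x ⬝ᵥ (S *ᵥ x) + 2 * (d ⬝ᵥ (S *ᵥ x)) + d ⬝ᵥ (S *ᵥ d) := by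
  rw [mulVec_add, dotProduct_add, add_dotProduct, add_dotProduct, hS.dotProduct_mulVec_comm x d]
  ring

theorem Matrix.PosDef.dotProduct_mulVec_le_of_mulVec_eq_smul_add_smul {S : Matrix ι ι ℝ}
    (hS : S.PosDef) {x w a b : ι → ℝ} {α β : ℝ} (hx : S *ᵥ x = α • a + β • b)
    (ha : a ⬝ᵥ w = a ⬝ᵥ x) (hb : b ⬝ᵥ w = b ⬝ᵥ x) :
    x ⬝ᵥ (S *ᵥ x) ≤ w ⬝ᵥ (S *ᵥ w) ∧ (w ⬝ᵥ (S *ᵥ w) = x ⬝ᵥ (S *ᵥ x) ↔ w = x) := by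
  have horth : (w - x) ⬝ᵥ (S *ᵥ x) = 0 := by
    rw [hx, dotProduct_add, dotProduct_smul, dotProduct_smul, dotProduct_comm _ a,
      dotProduct_comm _ b, dotProduct_sub, dotProduct_sub, ha, hb, sub_self, sub_self, smul_zero,
      smul_zero, add_zero]
  have hdecomp := (isHermitian_iff_isSymm.mp hS.isHermitian).add_dotProduct_mulVec_add x (w - x)
  rw [add_sub_cancel, horth, mul_zero, add_zero] at hdecomp
  have hnonneg : 0 ≤ (w - x) ⬝ᵥ (S *ᵥ (w - x)) := by
    simpa using hS.posSemidef.dotProduct_mulVec_nonneg (w - x)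
  refine ⟨by linarith, fun heq => ?_, fun h => by rw [h]⟩
  by_contra hne
  have hpos := hS.dotProduct_mulVec_pos (sub_ne_zero.mpr hne)
  simp only [star_trivial] at hpos
  linarith

theorem Matrix.mulVec_nonsing_inv_mulVec {S : Matrix ι ι ℝ} [DecidableEq ι] (hS : IsUnit S.det)
    (x : ι → ℝ) : S *ᵥ (S⁻¹ *ᵥ x) = x := by
  rw [mulVec_mulVec, mul_nonsing_inv S hS, one_mulVec]

theorem Matrix.sub_inv_smul_vecMulVec_mulVec (A : Matrix ι ι ℝ) (a μ : ι → ℝ) :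
    (A - (a ⬝ᵥ (A *ᵥ a))⁻¹ • vecMulVec (A *ᵥ a) (a ᵥ* A)) *ᵥ μ
      = A *ᵥ (μ - (a ⬝ᵥ (A *ᵥ μ) / a ⬝ᵥ (A *ᵥ a)) • a) := by
  rw [sub_mulVec, smul_mulVec, vecMulVec_mulVec, op_smul_eq_smul, ← dotProduct_mulVec, smul_smul,
    mulVec_sub, mulVec_smul, div_eq_inv_mul]

theorem Matrix.dotProduct_mulVec_sub_div_smul_self (A : Matrix ι ι ℝ) (a μ : ι → ℝ)
    (ha : a ⬝ᵥ (A *ᵥ a) ≠ 0) :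
    a ⬝ᵥ (A *ᵥ (μ - (a ⬝ᵥ (A *ᵥ μ) / a ⬝ᵥ (A *ᵥ a)) • a)) = 0 := by
  rw [mulVec_sub, mulVec_smul, dotProduct_sub, dotProduct_smul, smul_eq_mul, div_mul_cancel₀ _ ha,
    sub_self]

theorem Matrix.PosDef.dotProduct_mulVec_sub_div_smul_pos {A : Matrix ι ι ℝ} (hA : A.PosDef)
    {a μ : ι → ℝ} (ha : a ≠ 0) (hμ : ∀ r : ℝ, μ ≠ r • a) :
    0 < μ ⬝ᵥ (A *ᵥ (μ - (a ⬝ᵥ (A *ᵥ μ) / a ⬝ᵥ (A *ᵥ a)) • a)) := by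
  set v := μ - (a ⬝ᵥ (A *ᵥ μ) / a ⬝ᵥ (A *ᵥ a)) • a
  have haa : 0 < a ⬝ᵥ (A *ᵥ a) := by simpa using hA.dotProduct_mulVec_pos ha
  have hv : v ≠ 0 := fun h => hμ _ (sub_eq_zero.mp h)
  have hμv : μ ⬝ᵥ (A *ᵥ v) = v ⬝ᵥ (A *ᵥ v) := by
    rw [sub_dotProduct, smul_dotProduct, dotProduct_mulVec_sub_div_smul_self A a μ haa.ne',
      smul_zero, sub_zero]
  simpa [hμv] using hA.dotProduct_mulVec_pos hv

theorem stmt11_general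
    {k : ℕ} (Sig : Matrix (Fin k) (Fin k) ℝ)
    (hpos : Sig.PosDef)
    (μ : Fin k → ℝ) (hμ : ∀ c : ℝ, μ ≠ fun _ => c) (R₀ : ℝ)
    (w_GMV : Fin k → ℝ)
    (hw : w_GMV = ((1 : Fin k → ℝ) ⬝ᵥ (Sig⁻¹ *ᵥ (1 : Fin k → ℝ)))⁻¹ •
      (Sig⁻¹ *ᵥ (1 : Fin k → ℝ)))
    (R_GMV : ℝ)
    (hR : R_GMV = ((1 : Fin k → ℝ) ⬝ᵥ (Sig⁻¹ *ᵥ μ)) /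
      ((1 : Fin k → ℝ) ⬝ᵥ (Sig⁻¹ *ᵥ (1 : Fin k → ℝ))))
    (V_GMV : ℝ)
    (hV : V_GMV = ((1 : Fin k → ℝ) ⬝ᵥ (Sig⁻¹ *ᵥ (1 : Fin k → ℝ)))⁻¹)
    (M : Matrix (Fin k) (Fin k) ℝ)
    (hM : M = Sig⁻¹ -
      ((1 : Fin k → ℝ) ⬝ᵥ (Sig⁻¹ *ᵥ (1 : Fin k → ℝ)))⁻¹ •
        vecMulVec (Sig⁻¹ *ᵥ (1 : Fin k → ℝ)) (vecMul (1 : Fin k → ℝ) Sig⁻¹))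
    (s : ℝ) (hs : s = μ ⬝ᵥ (M *ᵥ μ))
    (wstar : Fin k → ℝ)
    (hwstar : wstar = w_GMV + ((R₀ - R_GMV) / s) • (M *ᵥ μ)) :
    ∀ w : Fin k → ℝ, (1 : Fin k → ℝ) ⬝ᵥ w = 1 → μ ⬝ᵥ w = R₀ →
      (w ⬝ᵥ (Sig *ᵥ w) ≥ V_GMV + (R₀ - R_GMV) ^ 2 / s
      ∧ (w ⬝ᵥ (Sig *ᵥ w) = V_GMV + (R₀ - R_GMV) ^ 2 / s ↔ w = wstar)) := by
  intro w h1w hμw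
  have hA : Sig⁻¹.PosDef := hpos.inv
  have h1 : (1 : Fin k → ℝ) ≠ 0 := fun h => by simp [h] at h1w
  have hc : 0 < (1 : Fin k → ℝ) ⬝ᵥ (Sig⁻¹ *ᵥ 1) := by simpa using hA.dotProduct_mulVec_pos h1
  have hv1 := dotProduct_mulVec_sub_div_smul_self Sig⁻¹ 1 μ hc.ne'
  have hs_pos := hA.dotProduct_mulVec_sub_div_smul_pos h1 fun r h => hμ r (h.trans (by ext; simp))
  rw [hM, sub_inv_smul_vecMulVec_mulVec] at hs hwstar
  rw [← hR] at hs hwstar hv1 hs_pos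
  rw [← hs] at hs_pos
  rw [← hV] at hw
  have hdet : IsUnit Sig.det := isUnit_iff_ne_zero.mpr hpos.det_pos.ne'
  set t := (R₀ - R_GMV) / s
  have hSig : Sig *ᵥ wstar = (V_GMV - t * R_GMV) • 1 + t • μ := by
    rw [hwstar, hw, mulVec_add, mulVec_smul, mulVec_smul, mulVec_nonsing_inv_mulVec hdet,
      mulVec_nonsing_inv_mulVec hdet]
    module
  have h1star : (1 : Fin k → ℝ) ⬝ᵥ wstar = 1 := by
    rw [hwstar, hw, dotProduct_add, dotProduct_smul, dotProduct_smul, hv1, hV, smul_eq_mul,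
      inv_mul_cancel₀ hc.ne', smul_zero, add_zero]
  have hμstar : μ ⬝ᵥ wstar = R₀ := by
    rw [hwstar, hw, dotProduct_add, dotProduct_smul, dotProduct_smul, ← hs,
      (isHermitian_iff_isSymm.mp hA.isHermitian).dotProduct_mulVec_comm, smul_eq_mul, smul_eq_mul,
      div_mul_cancel₀ _ hs_pos.ne', hV, ← div_eq_inv_mul, ← hR]
    ring
  have hval : wstar ⬝ᵥ (Sig *ᵥ wstar) = V_GMV + (R₀ - R_GMV) ^ 2 / s := by
    rw [hSig, dotProduct_add, dotProduct_smul, dotProduct_smul, dotProduct_comm, h1star,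
      dotProduct_comm, hμstar]
    simp only [smul_eq_mul, t]
    field_simp
    ring
  rw [← hval, ge_iff_le]
  exact hpos.dotProduct_mulVec_le_of_mulVec_eq_smul_add_smul hSig (h1w.trans h1star.symm)
    (hμw.trans hμstar.symm)

theorem stmt11
    {k : ℕ} (Sig : Matrix (Fin k) (Fin k) ℝ)
    (hsym : Sig.IsSymm) (hpos : Sig.PosDef)
    (μ : Fin k → ℝ) (hμ : ∀ c : ℝ, μ ≠ fun _ => c) (R₀ : ℝ)
    (w_GMV : Fin k → ℝ)
    (hw : w_GMV = ((1 : Fin k → ℝ) ⬝ᵥ (Sig⁻¹ *ᵥ (1 : Fin k → ℝ)))⁻¹ •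
      (Sig⁻¹ *ᵥ (1 : Fin k → ℝ)))
    (R_GMV : ℝ)
    (hR : R_GMV = ((1 : Fin k → ℝ) ⬝ᵥ (Sig⁻¹ *ᵥ μ)) /
      ((1 : Fin k → ℝ) ⬝ᵥ (Sig⁻¹ *ᵥ (1 : Fin k → ℝ))))
    (V_GMV : ℝ)
    (hV : V_GMV = ((1 : Fin k → ℝ) ⬝ᵥ (Sig⁻¹ *ᵥ (1 : Fin k → ℝ)))⁻¹)
    (M : Matrix (Fin k) (Fin k) ℝ)
    (hM : M = Sig⁻¹ -
      ((1 : Fin k → ℝ) ⬝ᵥ (Sig⁻¹ *ᵥ (1 : Fin k → ℝ)))⁻¹ •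
        vecMulVec (Sig⁻¹ *ᵥ (1 : Fin k → ℝ)) (vecMul (1 : Fin k → ℝ) Sig⁻¹))
    (s : ℝ) (hs : s = μ ⬝ᵥ (M *ᵥ μ))
    (wstar : Fin k → ℝ)
    (hwstar : wstar = w_GMV + ((R₀ - R_GMV) / s) • (M *ᵥ μ)) :
    ∀ w : Fin k → ℝ, (1 : Fin k → ℝ) ⬝ᵥ w = 1 → μ ⬝ᵥ w = R₀ →
      (w ⬝ᵥ (Sig *ᵥ w) ≥ V_GMV + (R₀ - R_GMV) ^ 2 / s
      ∧ (w ⬝ᵥ (Sig *ᵥ w) = V_GMV + (R₀ - R_GMV) ^ 2 / s ↔ w = wstar)) :=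
  stmt11_general Sig hpos μ hμ R₀ w_GMV hw R_GMV hR V_GMV hV M hM s hs wstar hwstar
end
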